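/- arXiv:1510.05441 — 3 statements merged into one kernel-verified Lean document; each statement's English description precedes it below -/
import Mathlib

section
/- Let $T$ be a densely defined linear operator in a complex Hilbert space $\mathcal{H}$ such that $\mathrm{dom}(T) \subseteq \mathrm{dom}(T^*)$ and for all $f, g \in \mathrm{dom}(T)$ one has $\langle f, f\rangle + \langle g, Tf\rangle + \langle Tf, g\rangle + \langle Tg, Tg\rangle \ge 0$. If additionally $T^* \,\mathrm{dom}(T) \subseteq \mathrm{dom}(T)$, then $\|T^* g\| \le \|T g\|$ for every $g \in \mathrm{dom}(T)$, i.e., $T$ is hyponormal. -/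
open scoped InnerProductSpace

/-- If `T` is a densely defined operator in a complex Hilbert space with
`dom T ⊆ dom T*`, the sum `⟨f,f⟩ + ⟨g,Tf⟩ + ⟨Tf,g⟩ + ⟨Tg,Tg⟩` is a nonnegative real
for all `f, g ∈ dom T`, and `T* dom T ⊆ dom T`, then `‖T* g‖ ≤ ‖T g‖` for all
`g ∈ dom T`, i.e. `T` is hyponormal. -/
theorem stmt_1 {H : Type*} [NormedAddCommGroup H] [InnerProductSpace ℂ H]
    [CompleteSpace H] (T : H →ₗ.[ℂ] H) (hdense : Dense (T.domain : Set H))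
    (hdom : T.domain ≤ T.adjoint.domain)
    (hpos : ∀ f g : T.domain,
      (⟪(f : H), (f : H)⟫_ℂ + ⟪(g : H), T f⟫_ℂ + ⟪T f, (g : H)⟫_ℂ + ⟪T g, T g⟫_ℂ).im = 0 ∧
      0 ≤ (⟪(f : H), (f : H)⟫_ℂ + ⟪(g : H), T f⟫_ℂ + ⟪T f, (g : H)⟫_ℂ + ⟪T g, T g⟫_ℂ).re)
    (hinv : ∀ g : T.domain, (T.adjoint ⟨(g : H), hdom g.2⟩ : H) ∈ T.domain) :
    ∀ g : T.domain, ‖T.adjoint ⟨(g : H), hdom g.2⟩‖ ≤ ‖T g‖ := by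
  intro g
  set a : H := T.adjoint ⟨(g : H), hdom g.2⟩ with ha
  set f : T.domain := -⟨a, hinv g⟩ with hf
  have hfa : (f : H) = -a := rfl
  have hadj : ⟪a, (f : H)⟫_ℂ = ⟪(g : H), T f⟫_ℂ :=
    T.adjoint_isFormalAdjoint hdense ⟨(g : H), hdom g.2⟩ f
  have h1 : ⟪(g : H), T f⟫_ℂ = -(‖a‖ : ℂ)^2 := by
    rw [← hadj, hfa, inner_neg_right, inner_self_eq_norm_sq_to_K]
    norm_cast
  have h2 : ⟪T f, (g : H)⟫_ℂ = -(‖a‖ : ℂ)^2 := by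
    rw [← inner_conj_symm, h1]
    simp
  have h3 : ⟪(f : H), (f : H)⟫_ℂ = (‖a‖ : ℂ)^2 := by
    rw [hfa, inner_neg_neg, inner_self_eq_norm_sq_to_K]
    norm_cast
  have h4 : ⟪T g, T g⟫_ℂ = (‖T g‖ : ℂ)^2 := inner_self_eq_norm_sq_to_K _
  have := (hpos f g).2
  rw [h1, h2, h3, h4] at this
  simp only [Complex.add_re, Complex.neg_re, Complex.ofReal_pow] at this
  have key : ‖a‖^2 ≤ ‖(T g : H)‖^2 := by
    simp only [← Complex.ofReal_pow, Complex.ofReal_re] at this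
    linarith
  nlinarith [norm_nonneg a, norm_nonneg (T g : H)]
end

section
/- Let $X = [0,1]$ with the measure $\mu(\sigma) = \int_\sigma x^{-1/2}\, dx$ on Borel sets, and let $\mathbf{A}(x) = 1-x$. Then the set $\{f \in L^2(\mu) : \int_0^1 |f(x)|^2 \sqrt{x/(1-x)}\, d\mu(x) < \infty\}$ is a proper subset of $L^2(\mu)$; in particular there exists $f \in L^2(\mu)$ with $\int_0^1 |f(x)|^2 \sqrt{x/(1-x)}\, \frac{dx}{\sqrt{x}} = \infty$. -/
open MeasureTheory Set Real

/-! Take `f x = (1 - x)^(-1/4)`. Against `dμ = x^(-1/2) dx` its square has density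
`1 / √(x (1 - x))`, the derivative of `arcsin (2x - 1)`, hence is integrable on `[0, 1]`;
multiplied by the weight `√(x / (1 - x))` it has density `1 / (1 - x)`, which is not. -/

lemma hasDerivAt_arcsin_two_mul_sub_one {x : ℝ} (hx : x ∈ Ioo (0 : ℝ) 1) :
    HasDerivAt (fun x => arcsin (2 * x - 1)) (1 / √(x * (1 - x))) x := by
  obtain ⟨hx0, hx1⟩ := hx
  have hd := (hasDerivAt_arcsin (x := 2 * x - 1) (by linarith) (by linarith)).comp x
    (((hasDerivAt_id x).const_mul 2).sub_const 1)
  refine hd.congr_deriv ?_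
  have hsq : 1 - (2 * x - 1) ^ 2 = 2 ^ 2 * (x * (1 - x)) := by ring
  rw [hsq, sqrt_mul (by positivity), sqrt_sq zero_le_two]
  have : 0 < √(x * (1 - x)) := sqrt_pos.2 (by nlinarith)
  field_simp

lemma integrableOn_one_div_sqrt_mul_one_sub :
    IntegrableOn (fun x : ℝ => 1 / √(x * (1 - x))) (Icc 0 1) := by
  rw [integrableOn_Icc_iff_integrableOn_Ioc]
  exact intervalIntegral.integrableOn_deriv_of_nonneg (by fun_prop)
    (fun x hx => hasDerivAt_arcsin_two_mul_sub_one hx) (fun x _ => by positivity)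

lemma lintegral_ofReal_inv_one_sub_eq_top :
    ∫⁻ x in Ioo (0 : ℝ) 1, ENNReal.ofReal (1 - x)⁻¹ = ⊤ := by
  by_contra h
  have hpos : 0 ≤ᵐ[volume.restrict (Ioo (0 : ℝ) 1)] fun x => (1 - x)⁻¹ := by
    filter_upwards [ae_restrict_mem measurableSet_Ioo] with x hx
    exact inv_nonneg.2 (by linarith [hx.2])
  have hint := (lintegral_ofReal_ne_top_iff_integrable (by fun_prop) hpos).1 h
  have hii : IntervalIntegrable (fun x : ℝ => (x - 1)⁻¹) volume 0 1 := by
    rw [intervalIntegrable_iff_integrableOn_Ioo_of_le zero_le_one]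
    refine hint.neg.congr (Filter.Eventually.of_forall fun x => ?_)
    simp only [Pi.neg_apply, ← inv_neg, neg_sub]
  simp at hii

lemma sq_one_div_sqrt_sqrt (y : ℝ) : (1 / √(√y)) ^ 2 = 1 / √y := by
  rw [div_pow, one_pow, sq_sqrt (sqrt_nonneg y)]

/-- For `μ` the measure on `[0,1]` with density `x^{-1/2}` w.r.t. Lebesgue measure,
the set `{f ∈ L²(μ) : ∫ |f|² √(x/(1-x)) dμ < ∞}` is a proper subset of `L²(μ)`:
there is `f ∈ L²(μ)` with `∫ |f(x)|² √(x/(1-x)) dμ(x) = ∞`. -/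
theorem stmt_4 :
    ∃ f : ℝ → ℝ,
      MemLp f 2 ((volume.restrict (Set.Icc (0 : ℝ) 1)).withDensity
        (fun x => ENNReal.ofReal (1 / Real.sqrt x))) ∧
      ∫⁻ x, ENNReal.ofReal ((f x) ^ 2 * Real.sqrt (x / (1 - x)))
        ∂((volume.restrict (Set.Icc (0 : ℝ) 1)).withDensity
          (fun x => ENNReal.ofReal (1 / Real.sqrt x))) = ⊤ := by
  have hρ : Measurable fun x : ℝ => ENNReal.ofReal (1 / √x) := by fun_prop
  have hf : Measurable fun x : ℝ => 1 / √(√(1 - x)) := by fun_prop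
  refine ⟨fun x => 1 / √(√(1 - x)), ?_, ?_⟩
  · rw [memLp_two_iff_integrable_sq hf.aestronglyMeasurable,
      integrable_withDensity_iff hρ (ae_of_all _ fun _ => ENNReal.ofReal_lt_top)]
    refine integrableOn_one_div_sqrt_mul_one_sub.congr_fun (fun x hx => ?_) measurableSet_Icc
    dsimp only
    rw [sq_one_div_sqrt_sqrt, ENNReal.toReal_ofReal (by positivity), sqrt_mul hx.1,
      ← one_div_mul_one_div, mul_comm]
  · rw [lintegral_withDensity_eq_lintegral_mul _ hρ (by fun_prop), eq_top_iff,
      ← lintegral_ofReal_inv_one_sub_eq_top]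
    calc ∫⁻ x in Ioo (0 : ℝ) 1, ENNReal.ofReal (1 - x)⁻¹
        = ∫⁻ x in Ioo (0 : ℝ) 1, ENNReal.ofReal (1 / √x) *
            ENNReal.ofReal ((1 / √(√(1 - x))) ^ 2 * √(x / (1 - x))) := by
          refine setLIntegral_congr_fun measurableSet_Ioo fun x ⟨hx0, hx1⟩ => ?_
          have h1x : 0 < 1 - x := by linarith
          rw [← ENNReal.ofReal_mul (by positivity), sq_one_div_sqrt_sqrt, sqrt_div hx0.le]
          have : 0 < √x := sqrt_pos.2 hx0
          have : 0 < √(1 - x) := sqrt_pos.2 h1x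
          field_simp
          rw [sq_sqrt h1x.le]
      _ ≤ _ := lintegral_mono_set Ioo_subset_Icc_self
end

section
/- Let $(p_j), (\alpha_j)$ be positive sequences in $\ell^1(\mathbb{N})$ with $p_{j+1}/p_j\in(m,M)$ for some $0<m<M<\infty$ and $\sup_j \alpha_j/p_j < \infty$. Let $\widehat{\mathbf{b}}$ be a symmetric $\eta$-banded real matrix with $|\widehat b_{ij}|\le\alpha_i$, and set $\mathbf{b} = I + \widehat{\mathbf{b}}$ entrywise. Then there exists $\widetilde C > 0$ such that for every $x = (x_j)\in\mathbb{R}^{\mathbb{N}}$, $\left|\sum_{j=1}^\infty \left(x_j^2 - ((\mathbf{b}x)_j)^2\right)\right| \le \widetilde C \sum_{j=1}^\infty x_j^2 p_j$ (both sides possibly infinite, with the convention that the inequality holds trivially when the right side is infinite). -/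
/-!
Writing `B = ∑ₖ b̂ⱼₖ xₖ` over the window `|k - j| ≤ η`, Cauchy–Schwarz and `|b̂ⱼₖ| ≤ αⱼ ≤ c pⱼ`
give `B² ≤ (c pⱼ)² (2η+1) sⱼ` with `sⱼ = ∑ₖ xₖ²`, whence
`|xⱼ² - (xⱼ + B)²| ≤ 2|xⱼ||B| + B² ≲ pⱼ sⱼ`. The ratio condition makes `pⱼ ≤ L^η pₖ` on the
window, so `pⱼ sⱼ ≲ ∑ₖ xₖ² pₖ`, and summing over `j` counts each `xₖ² pₖ` at most `2η+1` times.
-/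

open Finset

lemma card_Icc_sub_add_le (j η : ℕ) : #(Icc (j - η) (j + η)) ≤ 2 * η + 1 := by
  rw [Nat.card_Icc]; omega

lemma sum_range_sum_Icc_le {f : ℕ → ℝ} (hf : ∀ k, 0 ≤ f k) (η n : ℕ) :
    ∑ j ∈ range n, ∑ k ∈ Icc (j - η) (j + η), f k
      ≤ (2 * η + 1) * ∑ k ∈ range (n + η), f k := by
  -- `k ∈ Icc (j - η) (j + η) ↔ j ∈ Icc (k - η) (k + η)`, so each `f k` is counted at most
  -- `2η + 1` times
  rw [sum_comm' (t' := range (n + η)) (s' := fun k => range n ∩ Icc (k - η) (k + η))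
    (fun j k => by simp only [mem_inter, mem_range, mem_Icc]; omega), mul_sum]
  refine sum_le_sum fun k _ => ?_
  rw [sum_const, nsmul_eq_mul]
  gcongr ?_ * _
  · exact hf k
  exact_mod_cast (card_le_card inter_subset_right).trans (card_Icc_sub_add_le k η)

lemma summable_sum_Icc_and_tsum_le {f : ℕ → ℝ} (hf : ∀ k, 0 ≤ f k) (hsum : Summable f)
    (η : ℕ) :
    Summable (fun j => ∑ k ∈ Icc (j - η) (j + η), f k) ∧
      ∑' j, ∑ k ∈ Icc (j - η) (j + η), f k ≤ (2 * η + 1) * ∑' k, f k := by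
  have hbound : ∀ n, ∑ j ∈ range n, ∑ k ∈ Icc (j - η) (j + η), f k
      ≤ (2 * η + 1) * ∑' k, f k :=
    fun n => (sum_range_sum_Icc_le hf η n).trans <|
      mul_le_mul_of_nonneg_left (hsum.sum_le_tsum _ fun k _ => hf k) (by positivity)
  have hnn : ∀ j, 0 ≤ ∑ k ∈ Icc (j - η) (j + η), f k := fun j => sum_nonneg fun k _ => hf k
  exact ⟨summable_of_sum_range_le hnn hbound, Real.tsum_le_of_sum_range_le hnn hbound⟩

lemma abs_sq_sub_add_sq_le {x B q r : ℝ} (hq : 0 ≤ q) (hx : x ^ 2 ≤ r)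
    (hB : B ^ 2 ≤ q ^ 2 * r) : |x ^ 2 - (x + B) ^ 2| ≤ q * (2 + q) * r := by
  have hr : 0 ≤ r := (sq_nonneg x).trans hx
  -- `|x| ≤ √r` and `|B| ≤ q √r`, compared after squaring
  have hxB : 2 * |x * B| ≤ 2 * q * r := by
    have : (x * B) ^ 2 ≤ (q * r) ^ 2 := by
      rw [mul_pow, mul_pow]; nlinarith [sq_nonneg B]
    linarith [abs_le_of_sq_le_sq this (by positivity)]
  calc |x ^ 2 - (x + B) ^ 2| = |2 * (x * B) + B ^ 2| := by
        rw [← abs_neg]; ring_nf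
    _ ≤ |2 * (x * B)| + |B ^ 2| := abs_add_le _ _
    _ = 2 * |x * B| + B ^ 2 := by rw [abs_mul, abs_two, abs_sq]
    _ ≤ q * (2 + q) * r := by nlinarith

lemma sq_sum_mul_le {ι : Type*} (s : Finset ι) {a : ι → ℝ} {A : ℝ} (ha : ∀ k ∈ s, |a k| ≤ A)
    (x : ι → ℝ) : (∑ k ∈ s, a k * x k) ^ 2 ≤ A ^ 2 * (#s * ∑ k ∈ s, x k ^ 2) := by
  have ha2 : ∑ k ∈ s, a k ^ 2 ≤ #s * A ^ 2 := by
    simpa using sum_le_card_nsmul s _ _ fun k hk =>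
      sq_le_sq' (neg_le_of_abs_le (ha k hk)) (le_of_abs_le (ha k hk))
  calc (∑ k ∈ s, a k * x k) ^ 2 ≤ (∑ k ∈ s, a k ^ 2) * ∑ k ∈ s, x k ^ 2 :=
        sum_mul_sq_le_sq_mul_sq s a x
    _ ≤ #s * A ^ 2 * ∑ k ∈ s, x k ^ 2 :=
        mul_le_mul_of_nonneg_right ha2 (sum_nonneg fun k _ => sq_nonneg _)
    _ = A ^ 2 * (#s * ∑ k ∈ s, x k ^ 2) := by ring

lemma abs_sq_sub_add_sum_sq_le {ι : Type*} {s : Finset ι} {i : ι} (hi : i ∈ s)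
    {a x p : ι → ℝ} {c K : ℝ} (hc : 0 ≤ c) (hpi : 0 ≤ p i) (ha : ∀ k ∈ s, |a k| ≤ c * p i)
    (hp : ∀ k ∈ s, p i ≤ K * p k) :
    |x i ^ 2 - (x i + ∑ k ∈ s, a k * x k) ^ 2|
      ≤ c * (2 + c * p i) * #s * K * ∑ k ∈ s, x k ^ 2 * p k := by
  have hxi : x i ^ 2 ≤ #s * ∑ k ∈ s, x k ^ 2 := by
    have h1 : x i ^ 2 ≤ ∑ k ∈ s, x k ^ 2 := single_le_sum (fun k _ => sq_nonneg (x k)) hi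
    have h2 : (1 : ℝ) ≤ #s := by exact_mod_cast card_pos.2 ⟨i, hi⟩
    nlinarith [(sq_nonneg (x i)).trans h1]
  have hweight : p i * ∑ k ∈ s, x k ^ 2 ≤ K * ∑ k ∈ s, x k ^ 2 * p k := by
    rw [mul_sum, mul_sum]
    exact sum_le_sum fun k hk => by nlinarith [hp k hk, sq_nonneg (x k)]
  calc |x i ^ 2 - (x i + ∑ k ∈ s, a k * x k) ^ 2|
      ≤ c * p i * (2 + c * p i) * (#s * ∑ k ∈ s, x k ^ 2) :=
        abs_sq_sub_add_sq_le (by positivity) hxi (sq_sum_mul_le s ha x)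
    _ = c * (2 + c * p i) * #s * (p i * ∑ k ∈ s, x k ^ 2) := by ring
    _ ≤ c * (2 + c * p i) * #s * (K * ∑ k ∈ s, x k ^ 2 * p k) := by gcongr
    _ = c * (2 + c * p i) * #s * K * ∑ k ∈ s, x k ^ 2 * p k := by ring

lemma exists_step_bounds_of_ratio_mem_Ioo {p : ℕ → ℝ} {m M : ℝ} (hm : 0 < m)
    (hp : ∀ n, 0 < p n) (hratio : ∀ n, p (n + 1) / p n ∈ Set.Ioo m M) :
    ∃ L, 1 ≤ L ∧ ∀ n, p (n + 1) ≤ L * p n ∧ p n ≤ L * p (n + 1) := by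
  refine ⟨max (max M m⁻¹) 1, le_max_right _ _, fun n => ⟨?_, ?_⟩⟩
  · have h := (div_lt_iff₀ (hp n)).1 (hratio n).2
    calc p (n + 1) ≤ M * p n := h.le
      _ ≤ max (max M m⁻¹) 1 * p n := by
          gcongr; exacts [(hp n).le, le_max_of_le_left (le_max_left _ _)]
  · have h := (lt_div_iff₀ (hp n)).1 (hratio n).1
    calc p n = m⁻¹ * (m * p n) := by field_simp
      _ ≤ m⁻¹ * p (n + 1) := by gcongr
      _ ≤ max (max M m⁻¹) 1 * p (n + 1) := by
          gcongr; exacts [(hp _).le, le_max_of_le_left (le_max_right _ _)]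

lemma le_pow_mul_add_and_add_le_pow_mul {p : ℕ → ℝ} {L : ℝ} (hL : 0 ≤ L)
    (hstep : ∀ n, p (n + 1) ≤ L * p n ∧ p n ≤ L * p (n + 1)) (n d : ℕ) :
    p n ≤ L ^ d * p (n + d) ∧ p (n + d) ≤ L ^ d * p n := by
  induction d with
  | zero => simp
  | succ d ih =>
    constructor
    · calc p n ≤ L ^ d * p (n + d) := ih.1
        _ ≤ L ^ d * (L * p (n + d + 1)) := by gcongr; exact (hstep _).2
        _ = L ^ (d + 1) * p (n + (d + 1)) := by ring_nf
    · calc p (n + (d + 1)) ≤ L * p (n + d) := (hstep _).1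
        _ ≤ L * (L ^ d * p n) := by gcongr; exact ih.2
        _ = L ^ (d + 1) * p n := by ring

lemma le_pow_mul_of_mem_Icc {p : ℕ → ℝ} {L : ℝ} (hL : 1 ≤ L) (hp : ∀ n, 0 ≤ p n)
    (hstep : ∀ n, p (n + 1) ≤ L * p n ∧ p n ≤ L * p (n + 1)) {j k η : ℕ}
    (hk : k ∈ Icc (j - η) (j + η)) : p j ≤ L ^ η * p k := by
  rw [mem_Icc] at hk
  have hL0 : 0 ≤ L := zero_le_one.trans hL
  rcases le_total k j with hkj | hjk
  · obtain ⟨d, rfl⟩ := Nat.exists_eq_add_of_le hkj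
    calc p (k + d) ≤ L ^ d * p k := (le_pow_mul_add_and_add_le_pow_mul hL0 hstep k d).2
      _ ≤ L ^ η * p k := mul_le_mul_of_nonneg_right (pow_le_pow_right₀ hL (by omega)) (hp k)
  · obtain ⟨d, rfl⟩ := Nat.exists_eq_add_of_le hjk
    calc p j ≤ L ^ d * p (j + d) := (le_pow_mul_add_and_add_le_pow_mul hL0 hstep j d).1
      _ ≤ L ^ η * p (j + d) :=
        mul_le_mul_of_nonneg_right (pow_le_pow_right₀ hL (by omega)) (hp _)

lemma abs_sq_sub_add_sum_Icc_le {p : ℕ → ℝ} {b : ℕ → ℕ → ℝ} {c P L : ℝ} (hc : 0 ≤ c)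
    (hp : ∀ n, 0 ≤ p n) (hP : ∀ n, p n ≤ P) (hb : ∀ j k, |b j k| ≤ c * p j) (hL : 1 ≤ L)
    (hstep : ∀ n, p (n + 1) ≤ L * p n ∧ p n ≤ L * p (n + 1)) (η : ℕ) (x : ℕ → ℝ) (j : ℕ) :
    |x j ^ 2 - (x j + ∑ k ∈ Icc (j - η) (j + η), b j k * x k) ^ 2|
      ≤ c * (2 + c * P) * (2 * η + 1) * L ^ η * ∑ k ∈ Icc (j - η) (j + η), x k ^ 2 * p k := by
  have hcard : (#(Icc (j - η) (j + η)) : ℝ) ≤ 2 * η + 1 := by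
    exact_mod_cast card_Icc_sub_add_le j η
  refine (abs_sq_sub_add_sum_sq_le (mem_Icc.2 ⟨Nat.sub_le j η, Nat.le_add_right j η⟩) hc
    (hp j) (fun k _ => hb j k) (fun k hk => le_pow_mul_of_mem_Icc hL hp hstep hk)).trans ?_
  have hsum : 0 ≤ ∑ k ∈ Icc (j - η) (j + η), x k ^ 2 * p k :=
    sum_nonneg fun k _ => mul_nonneg (sq_nonneg _) (hp k)
  have hpj := hp j
  have hP0 : 0 ≤ P := hpj.trans (hP j)
  gcongr
  exact hP j

theorem stmt_19_general (m M : ℝ) (hm : 0 < m)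
    (p α : ℕ → ℝ) (hp : ∀ j, 0 < p j)
    (hpsum : Summable p)
    (hratio : ∀ j, p (j + 1) / p j ∈ Set.Ioo m M)
    (c : ℝ) (hc : ∀ j, α j / p j ≤ c)
    (η : ℕ) (b : ℕ → ℕ → ℝ)
    (hbound : ∀ i j, |b i j| ≤ α i) :
    ∃ C > 0, ∀ x : ℕ → ℝ, Summable (fun j => x j ^ 2 * p j) →
      Summable (fun j =>
        |x j ^ 2 - (x j + ∑ k ∈ Finset.Icc (j - η) (j + η), b j k * x k) ^ 2|) ∧
      |∑' j, (x j ^ 2 - (x j + ∑ k ∈ Finset.Icc (j - η) (j + η), b j k * x k) ^ 2)|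
        ≤ C * ∑' j, x j ^ 2 * p j := by
  obtain ⟨L, hL, hstep⟩ := exists_step_bounds_of_ratio_mem_Ioo hm hp hratio
  have hb : ∀ j k, |b j k| ≤ c * p j := fun j k =>
    (hbound j k).trans ((div_le_iff₀ (hp j)).1 (hc j))
  have hc0 : 0 ≤ c := nonneg_of_mul_nonneg_left ((abs_nonneg _).trans (hb 0 0)) (hp 0)
  set C := c * (2 + c * ∑' n, p n) * (2 * η + 1) * L ^ η
  have hC : 0 ≤ C := by
    have hP0 : 0 ≤ ∑' n, p n := tsum_nonneg fun n => (hp n).le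
    positivity
  have hterm := abs_sq_sub_add_sum_Icc_le hc0 (fun n => (hp n).le)
    (fun n => hpsum.le_tsum n fun k _ => (hp k).le) hb hL hstep η
  refine ⟨(2 * η + 1) * C + 1, by positivity, fun x hx => ?_⟩
  have hf : ∀ j, 0 ≤ x j ^ 2 * p j := fun j => mul_nonneg (sq_nonneg _) (hp j).le
  obtain ⟨hg, hg_le⟩ := summable_sum_Icc_and_tsum_le hf hx η
  refine ⟨(hg.mul_left C).of_nonneg_of_le (fun j => abs_nonneg _) (hterm x), ?_⟩
  have hF : 0 ≤ ∑' j, x j ^ 2 * p j := tsum_nonneg hf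
  calc |_| ≤ C * ∑' j, ∑ k ∈ Icc (j - η) (j + η), x k ^ 2 * p k :=
        tsum_of_norm_bounded (hg.hasSum.mul_left C) fun j =>
          (Real.norm_eq_abs _).trans_le (hterm x j)
    _ ≤ C * ((2 * η + 1) * ∑' j, x j ^ 2 * p j) := by gcongr
    _ ≤ ((2 * η + 1) * C + 1) * ∑' j, x j ^ 2 * p j := by nlinarith

/-- For `b = I + b̂` with `b̂` symmetric `η`-banded, `|b̂ᵢⱼ| ≤ αᵢ`, `p, α ∈ ℓ¹` positive,
`p_{j+1}/p_j ∈ (m,M)` and `sup αⱼ/pⱼ < ∞`, there is `C̃ > 0` with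
`|∑ⱼ (xⱼ² - (bx)ⱼ²)| ≤ C̃ ∑ⱼ xⱼ² pⱼ` for all `x`.  (When the right-hand side is
infinite the inequality holds trivially, so we quantify over `x` with
`∑ xⱼ² pⱼ < ∞`; by bandedness `(bx)ⱼ = xⱼ + ∑_{|k-j|≤η} b̂ⱼₖ xₖ` is a finite sum.) -/
theorem stmt_19 (m M : ℝ) (hm : 0 < m) (hmM : m < M)
    (p α : ℕ → ℝ) (hp : ∀ j, 0 < p j) (hα : ∀ j, 0 < α j)
    (hpsum : Summable p) (hαsum : Summable α)
    (hratio : ∀ j, p (j + 1) / p j ∈ Set.Ioo m M)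
    (c : ℝ) (hc : ∀ j, α j / p j ≤ c)
    (η : ℕ) (b : ℕ → ℕ → ℝ)
    (hband : ∀ i j : ℕ, η < Int.natAbs ((i : ℤ) - (j : ℤ)) → b i j = 0)
    (hbound : ∀ i j, |b i j| ≤ α i) (hsymm : ∀ i j, b i j = b j i) :
    ∃ C > 0, ∀ x : ℕ → ℝ, Summable (fun j => x j ^ 2 * p j) →
      Summable (fun j =>
        |x j ^ 2 - (x j + ∑ k ∈ Finset.Icc (j - η) (j + η), b j k * x k) ^ 2|) ∧
      |∑' j, (x j ^ 2 - (x j + ∑ k ∈ Finset.Icc (j - η) (j + η), b j k * x k) ^ 2)|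
        ≤ C * ∑' j, x j ^ 2 * p j :=
  stmt_19_general m M hm p α hp hpsum hratio c hc η b hbound
end
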